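/- arXiv:1309.0152 — 2 statements merged into one kernel-verified Lean document; each statement's English description precedes it below -/
import Mathlib

section
/- The space ℓ_∞(F̂) = { x : ℕ → ℝ | sup_n |(f_n/f_{n+1}) x_n − (f_{n+1}/f_n) x_{n-1}| < ∞ } (with the convention that the n = 0 term is |x_0|) is a Banach space under the norm ‖x‖ = sup_n |(F̂x)_n|, isometrically isomorphic to ℓ_∞ via x ↦ F̂x. -/
open scoped BigOperators ENNReal
open Filter Topology

noncomputable def fibr (n : ℕ) : ℝ := (Nat.fib (n + 1) : ℝ)

lemma fibr_pos (n : ℕ) : 0 < fibr n := by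
  simpa [fibr] using Nat.cast_pos.mpr (Nat.fib_pos.mpr (Nat.succ_pos n))

noncomputable def Fhat (x : ℕ → ℝ) : ℕ → ℝ
  | 0 => x 0
  | (n + 1) => fibr (n + 1) / fibr (n + 2) * x (n + 1) - fibr (n + 2) / fibr (n + 1) * x n

lemma Fhat_add (x y : ℕ → ℝ) : Fhat (x + y) = Fhat x + Fhat y := by
  funext n; cases n <;> simp [Fhat] <;> ring

lemma Fhat_smul (c : ℝ) (x : ℕ → ℝ) : Fhat (c • x) = c • Fhat x := by
  funext n; cases n <;> simp [Fhat] <;> ring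

noncomputable def FhatL : (ℕ → ℝ) →ₗ[ℝ] (ℕ → ℝ) where
  toFun := Fhat
  map_add' := Fhat_add
  map_smul' := Fhat_smul

lemma Fhat_inj : Function.Injective Fhat := by
  have h0 : ∀ x : ℕ → ℝ, Fhat x = 0 → x = 0 := by
    intro x hx
    funext n
    induction n with
    | zero => simpa [Fhat] using congrFun hx 0
    | succ n ih =>
        have h := congrFun hx (n + 1)
        simp only [Fhat, ih, Pi.zero_apply, mul_zero, sub_zero] at h
        have h1 : fibr (n + 1) / fibr (n + 2) ≠ 0 :=
          div_ne_zero (fibr_pos _).ne' (fibr_pos _).ne'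
        simpa [Pi.zero_apply] using (mul_eq_zero.mp h).resolve_left h1
  have : Function.Injective FhatL := (injective_iff_map_eq_zero' FhatL).mpr
    (fun x => ⟨fun h => h0 x h, fun h => by simp [FhatL, h]; funext n; cases n <;> simp [Fhat]⟩)
  exact this

noncomputable def FhatLP : PreLp (fun _ : ℕ => ℝ) →ₗ[ℝ] PreLp (fun _ : ℕ => ℝ) where
  toFun x := Fhat x
  map_add' x y := Fhat_add x y
  map_smul' c x := Fhat_smul c x

noncomputable def ellF (p : ℝ≥0∞) : Submodule ℝ (PreLp (fun _ : ℕ => ℝ)) :=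
  (lpSubmodule ℝ (fun _ : ℕ => ℝ) p).comap FhatLP

instance (p : ℝ≥0∞) : CoeOut (ellF p) (ℕ → ℝ) := ⟨fun x => (x : PreLp (fun _ : ℕ => ℝ))⟩

noncomputable def ellFtoLp (p : ℝ≥0∞) : ellF p →ₗ[ℝ] lp (fun _ : ℕ => ℝ) p where
  toFun x := ⟨Fhat (x : ℕ → ℝ), x.2⟩
  map_add' x y := Subtype.ext (Fhat_add (x : ℕ → ℝ) (y : ℕ → ℝ))
  map_smul' c x := Subtype.ext (Fhat_smul c (x : ℕ → ℝ))

lemma ellFtoLp_inj (p : ℝ≥0∞) : Function.Injective (ellFtoLp p) := by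
  intro x y h
  have h2 : Fhat (x : ℕ → ℝ) = Fhat (y : ℕ → ℝ) := congrArg Subtype.val h
  exact Subtype.ext (Fhat_inj h2)

noncomputable instance (p : ℝ≥0∞) [Fact (1 ≤ p)] : NormedAddCommGroup (ellF p) :=
  NormedAddCommGroup.induced _ _ (ellFtoLp p) (ellFtoLp_inj p)

noncomputable instance (p : ℝ≥0∞) [Fact (1 ≤ p)] : NormedSpace ℝ (ellF p) :=
  NormedSpace.induced _ _ _ (ellFtoLp p)

noncomputable def abar (a : ℕ → ℝ) (k : ℕ) : ℝ :=
  ∑' j : ℕ, (fibr (k + j + 1)) ^ 2 / (fibr k * fibr (k + 1)) * a (k + j)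

noncomputable def hmnc {X : Type*} [MetricSpace X] (Q : Set X) : ℝ :=
  sInf {ε : ℝ | 0 < ε ∧ ∃ s : Finset X, Q ⊆ ⋃ x ∈ s, Metric.ball x ε}



instance factTop : Fact ((1 : ℝ≥0∞) ≤ ∞) := ⟨le_top⟩


/-! `F̂` is lower bidiagonal with nonzero diagonal, so forward substitution inverts it on all of
`ℕ → ℝ`. Since `ℓ_p(F̂)` is the preimage of `ℓ_p` under `F̂`, normed by pulling back the `ℓ_p`
norm, `F̂` is an isometric isomorphism `ℓ_p(F̂) ≃ ℓ_p`, and completeness transfers from `ℓ_p`. -/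

noncomputable def FhatInv (y : ℕ → ℝ) : ℕ → ℝ
  | 0 => y 0
  | (n + 1) => fibr (n + 2) / fibr (n + 1) *
      (y (n + 1) + fibr (n + 2) / fibr (n + 1) * FhatInv y n)

lemma Fhat_FhatInv (y : ℕ → ℝ) : Fhat (FhatInv y) = y := by
  funext n
  cases n with
  | zero => rfl
  | succ n =>
    have h1 := (fibr_pos (n + 1)).ne'
    have h2 := (fibr_pos (n + 2)).ne'
    simp only [Fhat, FhatInv]
    field_simp
    ring

lemma mem_ellF_iff {p : ℝ≥0∞} {x : PreLp (fun _ : ℕ => ℝ)} :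
    x ∈ ellF p ↔ Memℓp (Fhat x) p :=
  Iff.rfl

lemma ellFtoLp_surjective (p : ℝ≥0∞) : Function.Surjective (ellFtoLp p) := fun y =>
  have hy : Fhat (FhatInv y) = y := Fhat_FhatInv y
  ⟨⟨FhatInv y, mem_ellF_iff.2 (by rw [hy]; exact y.2)⟩, Subtype.ext hy⟩

noncomputable def ellFEquivLp (p : ℝ≥0∞) [Fact (1 ≤ p)] :
    ellF p ≃ₗᵢ[ℝ] lp (fun _ : ℕ => ℝ) p where
  toLinearEquiv :=
    LinearEquiv.ofBijective (ellFtoLp p) ⟨ellFtoLp_inj p, ellFtoLp_surjective p⟩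
  norm_map' _ := rfl

@[simp]
lemma coe_ellFEquivLp_apply (p : ℝ≥0∞) [Fact (1 ≤ p)] (x : ellF p) :
    (ellFEquivLp p x : ℕ → ℝ) = Fhat (x : ℕ → ℝ) :=
  rfl

instance (p : ℝ≥0∞) [Fact (1 ≤ p)] : CompleteSpace (ellF p) :=
  (ellFEquivLp p).toIsometryEquiv.completeSpace

lemma norm_ellF_top_eq_iSup (x : ellF ∞) : ‖x‖ = ⨆ n : ℕ, |Fhat (x : ℕ → ℝ) n| := by
  rw [← (ellFEquivLp ∞).norm_map, lp.norm_eq_ciSup]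
  simp only [coe_ellFEquivLp_apply, Real.norm_eq_abs]

theorem stmt4 :
    ∃ e : ellF ∞ ≃ₗ[ℝ] lp (fun _ : ℕ => ℝ) ∞,
      (∀ x : ellF ∞, ((e x : ∀ _ : ℕ, ℝ)) = Fhat (x : ℕ → ℝ)) ∧
      (∀ x : ellF ∞, ‖x‖ = ‖e x‖) ∧
      (∀ x : ellF ∞, ‖x‖ = ⨆ n : ℕ, |Fhat (x : ℕ → ℝ) n|) ∧
      CompleteSpace (ellF ∞) :=
  ⟨(ellFEquivLp ∞).toLinearEquiv, coe_ellFEquivLp_apply ∞,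
    fun x => ((ellFEquivLp ∞).norm_map x).symm, norm_ellF_top_eq_iSup, inferInstance⟩
end

section
/- Let 1 ≤ p < ∞ and let A be a matrix inducing a bounded operator L_A : ℓ_1(F̂) → ℓ_p, with associated matrix ā_{nk} = Σ_{j=k}^∞ (f_{j+1}^2/(f_k f_{k+1})) a_{nj}. Then the operator norm satisfies ‖L_A‖ = sup_k (Σ_n |ā_{nk}|^p)^{1/p} < ∞. -/
open scoped BigOperators ENNReal
open Filter Topology

instance factOne : Fact ((1 : ℝ≥0∞) ≤ 1) := ⟨le_rfl⟩

/-!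
The vectors `e_k = F̂⁻¹ δ_k`, with entries `f_{j+1}² / (f_k f_{k+1})` for `j ≥ k`, satisfy
`F̂ e_k = δ_k`, so `L e_k` is the `k`-th column `(ā_{nk})_n` and `‖L e_k‖_p` is the `k`-th term of
the supremum. Since `F̂` is an isometry of `ℓ₁(F̂)` into `ℓ₁`, every `x` is the norm-convergent
series `∑ (F̂x)_k e_k` with `‖x‖ = ∑ |(F̂x)_k|`, so as for operators on `ℓ₁` the norm of `L` is
`sup_k ‖L e_k‖`.
-/

section LpOne

variable {X F : Type*} [NormedAddCommGroup X] [NormedSpace ℝ X]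
  [NormedAddCommGroup F] [NormedSpace ℝ F]

theorem hasSum_smul_of_linearIsometry_lp {p : ℝ≥0∞} [Fact (1 ≤ p)] (hp : p ≠ ⊤)
    (Φ : X →ₗᵢ[ℝ] lp (fun _ : ℕ => ℝ) p) {e : ℕ → X}
    (he : ∀ k, Φ (e k) = lp.single p k 1) (x : X) :
    HasSum (fun k => (Φ x : ℕ → ℝ) k • e k) x := by
  rw [← Φ.isometry.isEmbedding.isInducing.hasSum_iff]
  convert lp.hasSum_single hp (Φ x) using 2 with k
  rw [Function.comp_apply, map_smul, he, ← lp.single_smul, smul_eq_mul, mul_one]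

theorem norm_le_of_hasSum_smul {e : ℕ → X} {c : ℕ → ℝ} {x : X} {s M : ℝ}
    (hx : HasSum (fun k => c k • e k) x) (hc : HasSum (fun k => |c k|) s)
    (T : X →L[ℝ] F) (hT : ∀ k, ‖T (e k)‖ ≤ M) : ‖T x‖ ≤ s * M := by
  refine (hx.mapL T).norm_le_of_bounded (hc.mul_right M) fun k => ?_
  rw [map_smul, norm_smul, Real.norm_eq_abs]
  exact mul_le_mul_of_nonneg_left (hT k) (abs_nonneg _)

theorem opNorm_eq_iSup_of_linearIsometry_lp_one (Φ : X →ₗᵢ[ℝ] lp (fun _ : ℕ => ℝ) 1)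
    {e : ℕ → X} (he : ∀ k, Φ (e k) = lp.single 1 k 1) (T : X →L[ℝ] F) :
    BddAbove (Set.range fun k => ‖T (e k)‖) ∧ ‖T‖ = ⨆ k, ‖T (e k)‖ := by
  have norm_e (k : ℕ) : ‖e k‖ = 1 := by
    rw [← Φ.norm_map, he, lp.norm_single zero_lt_one, norm_one]
  have le_opNorm (k : ℕ) : ‖T (e k)‖ ≤ ‖T‖ := by
    simpa [norm_e] using T.le_opNorm (e k)
  have hbdd : BddAbove (Set.range fun k => ‖T (e k)‖) := ⟨‖T‖, Set.forall_mem_range.2 le_opNorm⟩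
  refine ⟨hbdd, le_antisymm ?_ (ciSup_le le_opNorm)⟩
  refine T.opNorm_le_bound ((norm_nonneg _).trans (le_ciSup hbdd 0)) fun x => ?_
  have hnorm : HasSum (fun k => |(Φ x : ℕ → ℝ) k|) ‖x‖ := by
    simpa only [ENNReal.toReal_one, Real.rpow_one, Real.norm_eq_abs, Φ.norm_map] using
      lp.hasSum_norm (p := 1) (by simp) (Φ x)
  rw [mul_comm]
  exact norm_le_of_hasSum_smul (hasSum_smul_of_linearIsometry_lp ENNReal.one_ne_top Φ he x)
    hnorm T (le_ciSup hbdd)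

end LpOne

noncomputable def FhatInvCol (k : ℕ) : ℕ → ℝ :=
  fun j => if k ≤ j then fibr (j + 1) ^ 2 / (fibr k * fibr (k + 1)) else 0

lemma Fhat_FhatInvCol (k : ℕ) : Fhat (FhatInvCol k) = Pi.single k 1 := by
  funext n
  rcases n with _ | n
  · rcases k with _ | k <;> simp [Fhat, FhatInvCol, fibr]
  have := (fibr_pos (n + 1)).ne'
  have := (fibr_pos (n + 2)).ne'
  rcases lt_trichotomy (n + 1) k with h | rfl | h
  · simp [Fhat, FhatInvCol, h.ne, h.not_ge, (Nat.lt_of_succ_lt h).not_ge]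
  · simp only [Fhat, FhatInvCol, le_refl, ↓reduceIte, add_le_iff_nonpos_right, nonpos_iff_eq_zero,
      one_ne_zero, mul_zero, sub_zero, Pi.single_eq_same]
    field_simp
  · have := (fibr_pos k).ne'
    have := (fibr_pos (k + 1)).ne'
    simp only [Fhat, FhatInvCol, h.le, Nat.le_of_lt_succ h, ↓reduceIte,
      Pi.single_eq_of_ne h.ne']
    field_simp
    ring

lemma tsum_mul_FhatInvCol (a : ℕ → ℝ) (k : ℕ) :
    ∑' j, a j * FhatInvCol k j = abar a k := by
  rw [abar, ← (add_right_injective k).tsum_eq]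
  · simp [FhatInvCol, mul_comm]
  · intro j hj
    have hkj : k ≤ j := by
      by_contra hkj
      simp [FhatInvCol, hkj] at hj
    exact ⟨j - k, Nat.add_sub_cancel' hkj⟩

lemma FhatInvCol_mem_ellF (p : ℝ≥0∞) (k : ℕ) : (FhatInvCol k : PreLp (fun _ : ℕ => ℝ)) ∈ ellF p := by
  show Memℓp (Fhat (FhatInvCol k)) p
  rw [Fhat_FhatInvCol]
  exact (memℓp_zero ((Set.finite_singleton k).subset fun j hj => by
    by_contra hjk; exact hj (Pi.single_eq_of_ne hjk 1))).of_exponent_ge bot_le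

noncomputable def ellFSingle (p : ℝ≥0∞) (k : ℕ) : ellF p := ⟨FhatInvCol k, FhatInvCol_mem_ellF p k⟩

lemma ellFtoLp_ellFSingle (p : ℝ≥0∞) (k : ℕ) : ellFtoLp p (ellFSingle p k) = lp.single p k 1 :=
  lp.ext (Fhat_FhatInvCol k)

@[simp]
lemma coe_ellFSingle (p : ℝ≥0∞) (k : ℕ) : (ellFSingle p k : ℕ → ℝ) = FhatInvCol k := rfl

noncomputable def ellFtoLpIsometry (p : ℝ≥0∞) [Fact (1 ≤ p)] : ellF p →ₗᵢ[ℝ] lp (fun _ : ℕ => ℝ) p :=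
  ⟨ellFtoLp p, fun _ => rfl⟩

theorem stmt14_general (p : ℝ) [Fact (1 ≤ ENNReal.ofReal p)]
    (A : ℕ → ℕ → ℝ)
    (L : ellF 1 →L[ℝ] lp (fun _ : ℕ => ℝ) (ENNReal.ofReal p))
    (hrep : ∀ x : ellF 1, ∀ n : ℕ, (L x : ℕ → ℝ) n = ∑' k : ℕ, A n k * (x : ℕ → ℝ) k) :
    BddAbove (Set.range fun k : ℕ => (∑' n : ℕ, |abar (A n) k| ^ p) ^ (1 / p)) ∧
    ‖L‖ = ⨆ k : ℕ, (∑' n : ℕ, |abar (A n) k| ^ p) ^ (1 / p) := by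
  have hp1 : 1 ≤ p := ENNReal.one_le_ofReal.1 Fact.out
  have hp : (ENNReal.ofReal p).toReal = p := ENNReal.toReal_ofReal (by linarith)
  have hcol (k : ℕ) : ‖L (ellFSingle 1 k)‖ = (∑' n : ℕ, |abar (A n) k| ^ p) ^ (1 / p) := by
    rw [lp.norm_eq_tsum_rpow (by rw [hp]; linarith), hp]
    simp only [Real.norm_eq_abs, hrep, coe_ellFSingle, tsum_mul_FhatInvCol]
  simpa only [hcol] using
    opNorm_eq_iSup_of_linearIsometry_lp_one (ellFtoLpIsometry 1) (ellFtoLp_ellFSingle 1) L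

theorem stmt14 (p : ℝ) (hp : 1 ≤ p) [Fact (1 ≤ ENNReal.ofReal p)]
    (A : ℕ → ℕ → ℝ)
    (ha : ∀ n k : ℕ, Summable fun j : ℕ => |fibr (k + j + 1) ^ 2 / (fibr k * fibr (k + 1)) * A n (k + j)|)
    (L : ellF 1 →L[ℝ] lp (fun _ : ℕ => ℝ) (ENNReal.ofReal p))
    (hrep : ∀ x : ellF 1, ∀ n : ℕ, (L x : ℕ → ℝ) n = ∑' k : ℕ, A n k * (x : ℕ → ℝ) k) :
    BddAbove (Set.range fun k : ℕ => (∑' n : ℕ, |abar (A n) k| ^ p) ^ (1 / p)) ∧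
    ‖L‖ = ⨆ k : ℕ, (∑' n : ℕ, |abar (A n) k| ^ p) ^ (1 / p) :=
  stmt14_general p A L hrep
end
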